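/- arXiv:2401.02897 — 6 statements merged into one kernel-verified Lean document; each statement's English description precedes it below -/
import Mathlib

section
/- Let R and B be finite sets of points in ℝ² with B nonempty and |B ∪ R| ≥ 3, in general position. Then there exists a strip W with boundary lines ℓ₁ and ℓ₂ such that ℓ₁ contains at least two points of B ∪ R, ℓ₂ contains at least one point of B ∪ R, and |E(W)| ≤ |E(W')| for every strip W'. -/
/-!
Any strip may be shrunk, without creating errors, until each boundary line passes through
a point of `B ∪ R`; if it contains no point at all, it is collapsed onto a line through a blue
point instead. Keeping the two lines through these points, turn their common direction: a point
can change sides only by first landing on a boundary line, so the error set does not grow until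
one of the lines meets a second point, which must happen since no three points are collinear.
Hence the minimum of the error over strips anchored in this way is the global minimum.
-/

open Classical

noncomputable section

/-- Points in the plane. -/
abbrev Pt : Type := EuclideanSpace ℝ (Fin 2)

/-- The strip `{x : c₁ ≤ ⟪v, x⟫ ≤ c₂}`. -/
def strip (v : Pt) (c₁ c₂ : ℝ) : Set Pt :=
  {x | c₁ ≤ (inner ℝ v x : ℝ) ∧ (inner ℝ v x : ℝ) ≤ c₂}

/-- The misclassified points: red points in the interior of `W` together with
blue points outside the closure of `W`. -/
def errSet (R B : Finset Pt) (W : Set Pt) : Finset Pt :=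
  (R.filter fun p => p ∈ interior W) ∪ (B.filter fun p => p ∉ closure W)

/-- General position: no three points collinear, and pairwise distinct
`x`-coordinates. -/
def GenPos (P : Finset Pt) : Prop :=
  (∀ p ∈ P, ∀ q ∈ P, ∀ r ∈ P, p ≠ q → p ≠ r → q ≠ r →
      ¬ Collinear ℝ ({p, q, r} : Set Pt)) ∧
  (∀ p ∈ P, ∀ q ∈ P, p ≠ q → p 0 ≠ q 0)

open RealInnerProductSpace Module Finset

section InnerProductSpace

variable {E : Type*} [NormedAddCommGroup E] [InnerProductSpace ℝ E]

theorem exists_ne_zero_inner_eq_zero (hE : 1 < finrank ℝ E) (v : E) :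
    ∃ w ≠ 0, ⟪v, w⟫ = 0 := by
  have : FiniteDimensional ℝ E := Module.finite_of_finrank_pos (by omega)
  have hK : (ℝ ∙ v) ≠ ⊤ := fun h => by
    have : finrank ℝ (ℝ ∙ v) ≤ 1 := (finrank_span_le_card {v}).trans (by simp)
    rw [h, finrank_top] at this
    omega
  obtain ⟨w, hw, hw0⟩ :=
    Submodule.exists_mem_ne_zero_of_ne_bot (mt Submodule.orthogonal_eq_bot_iff.1 hK)
  exact ⟨w, hw0, Submodule.mem_orthogonal_singleton_iff_inner_right.1 hw⟩

theorem collinear_of_forall_inner_eq (hE : finrank ℝ E = 2) {w : E} (hw : w ≠ 0) {s : Set E}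
    {c : ℝ} (hs : ∀ x ∈ s, ⟪w, x⟫ = c) : Collinear ℝ s := by
  have : Fact (finrank ℝ E = 1 + 1) := ⟨hE⟩
  have : FiniteDimensional ℝ E := .of_fact_finrank_eq_succ 1
  have hspan : vectorSpan ℝ s ≤ (ℝ ∙ w)ᗮ := by
    refine Submodule.span_le.2 ?_
    rintro _ ⟨x, hx, y, hy, rfl⟩
    rw [SetLike.mem_coe, Submodule.mem_orthogonal_singleton_iff_inner_right]
    simp only [vsub_eq_sub, inner_sub_right, hs x hx, hs y hy, sub_self]
  rw [collinear_iff_finrank_le_one]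
  exact (Submodule.finrank_mono hspan).trans (Submodule.finrank_orthogonal_span_singleton hw).le

end InnerProductSpace

section Projection

variable {α : Type*} [DecidableEq α] (R B : Finset α)

def projErrors (f : α → ℝ) (a b : ℝ) : Finset α :=
  R.filter (fun s => f s ∈ Set.Ioo a b) ∪ B.filter (fun s => f s ∉ Set.Icc a b)

theorem exists_projErrors_subset (hB : B.Nonempty) (f : α → ℝ) (a b : ℝ) :
    ∃ p ∈ B ∪ R, ∃ r ∈ B ∪ R, f p ≤ f r ∧
      projErrors R B f (f p) (f r) ⊆ projErrors R B f a b := by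
  by_cases hS : ((B ∪ R).filter fun s => f s ∈ Set.Icc a b).Nonempty
  · obtain ⟨p, hpS, hpmin⟩ := exists_min_image _ f hS
    obtain ⟨r, hrS, hrmax⟩ := exists_max_image _ f hS
    rw [mem_filter] at hpS hrS
    refine ⟨p, hpS.1, r, hrS.1, hrmax p (mem_filter.2 hpS), union_subset_union ?_ ?_⟩
    · intro s
      simp only [mem_filter, Set.mem_Ioo]
      exact fun ⟨hs, hps, hsr⟩ => ⟨hs, hpS.2.1.trans_lt hps, hsr.trans_le hrS.2.2⟩
    · intro s
      simp only [mem_filter]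
      exact fun ⟨hs, hout⟩ => ⟨hs, fun hin => hout
        ⟨hpmin s (mem_filter.2 ⟨mem_union_left _ hs, hin⟩),
          hrmax s (mem_filter.2 ⟨mem_union_left _ hs, hin⟩)⟩⟩
  · obtain ⟨b₀, hb₀⟩ := hB
    refine ⟨b₀, mem_union_left _ hb₀, b₀, mem_union_left _ hb₀, le_rfl, ?_⟩
    intro s
    simp only [projErrors, mem_union, mem_filter, Set.Ioo_self, Set.mem_empty_iff_false,
      and_false, false_or]
    exact fun ⟨hs, _⟩ => Or.inr ⟨hs, fun hin => hS ⟨s, mem_filter.2 ⟨mem_union_left _ hs, hin⟩⟩⟩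

theorem projErrors_subset_of_order {f h : α → ℝ} {p r : α}
    (hord : ∀ s ∈ B ∪ R, ∀ q ∈ ({p, r} : Finset α),
      (h s < h q → f s < f q) ∧ (h q < h s → f q < f s)) :
    projErrors R B h (h p) (h r) ⊆ projErrors R B f (f p) (f r) := by
  have hp : p ∈ ({p, r} : Finset α) := mem_insert_self p _
  have hr : r ∈ ({p, r} : Finset α) := mem_insert_of_mem (mem_singleton_self r)
  intro s
  simp only [projErrors, mem_union, mem_filter, Set.mem_Ioo, Set.mem_Icc, not_and_or, not_le]
  rintro (⟨hs, hps, hsr⟩ | ⟨hs, hsp | hrs⟩)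
  · have hsP := mem_union_right B hs
    exact Or.inl ⟨hs, (hord s hsP p hp).2 hps, (hord s hsP r hr).1 hsr⟩
  · exact Or.inr ⟨hs, Or.inl ((hord s (mem_union_left R hs) p hp).1 hsp)⟩
  · exact Or.inr ⟨hs, Or.inr ((hord s (mem_union_left R hs) r hr).2 hrs)⟩

end Projection

theorem lt_of_add_mul_lt_add_mul {a a' b b' t : ℝ} (hbound : |t| * |b - b'| ≤ |a - a'|)
    (hlt : a + t * b < a' + t * b') : a < a' := by
  by_contra! hle
  have h₁ : t * (b' - b) ≤ |t| * |b - b'| := by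
    rw [abs_sub_comm, ← abs_mul]
    exact le_abs_self _
  rw [abs_of_nonneg (sub_nonneg.2 hle)] at hbound
  linarith

/-- `t` is the root of least absolute value of the affine functions
`t ↦ (f s - f q) + t * (g s - g q)` that are not constant, so none of them changes sign
strictly between `0` and `t`. -/
theorem exists_first_coincidence {α : Type*} (P Q : Finset α) (f g : α → ℝ)
    (h : ∃ s ∈ P, ∃ q ∈ Q, g s ≠ g q) :
    ∃ t : ℝ, (∃ s ∈ P, ∃ q ∈ Q, s ≠ q ∧ f s + t * g s = f q + t * g q) ∧
      ∀ s ∈ P, ∀ q ∈ Q, (f s + t * g s < f q + t * g q → f s < f q) ∧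
        (f q + t * g q < f s + t * g s → f q < f s) := by
  set T := ((P ×ˢ Q).filter fun x => g x.1 ≠ g x.2).image
    fun x => -(f x.1 - f x.2) / (g x.1 - g x.2)
  have hmemT : ∀ s ∈ P, ∀ q ∈ Q, g s ≠ g q → -(f s - f q) / (g s - g q) ∈ T :=
    fun s hs q hq hg => mem_image.2 ⟨(s, q), mem_filter.2 ⟨mem_product.2 ⟨hs, hq⟩, hg⟩, rfl⟩
  obtain ⟨s₀, hs₀, q₀, hq₀, hg₀⟩ := h
  obtain ⟨t, htT, htmin⟩ := T.exists_min_image (|·|) ⟨_, hmemT s₀ hs₀ q₀ hq₀ hg₀⟩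
  have hbound : ∀ s ∈ P, ∀ q ∈ Q, |t| * |g s - g q| ≤ |f s - f q| := by
    intro s hs q hq
    rcases eq_or_ne (g s) (g q) with hg | hg
    · simp [hg]
    · calc |t| * |g s - g q| ≤ |-(f s - f q) / (g s - g q)| * |g s - g q| :=
            mul_le_mul_of_nonneg_right (htmin _ (hmemT s hs q hq hg)) (abs_nonneg _)
        _ = |f s - f q| := by
            rw [abs_div, abs_neg, div_mul_cancel₀ _ (abs_ne_zero.2 (sub_ne_zero.2 hg))]
  obtain ⟨⟨s, q⟩, hsq, rfl⟩ := mem_image.1 htT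
  obtain ⟨hsq, hg⟩ := mem_filter.1 hsq
  obtain ⟨hs, hq⟩ := mem_product.1 hsq
  refine ⟨_, ⟨s, hs, q, hq, fun h => hg (h ▸ rfl), ?_⟩, fun s' hs' q' hq' =>
    ⟨lt_of_add_mul_lt_add_mul (hbound s' hs' q' hq'), lt_of_add_mul_lt_add_mul ?_⟩⟩
  · linear_combination div_mul_cancel₀ (-(f s - f q)) (sub_ne_zero.2 hg)
  · rw [abs_sub_comm, abs_sub_comm (f q')]
    exact hbound s' hs' q' hq'

theorem finrank_pt : finrank ℝ Pt = 2 :=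
  finrank_euclideanSpace_fin

theorem strip_eq_preimage (v : Pt) (c₁ c₂ : ℝ) :
    strip v c₁ c₂ = innerSL ℝ v ⁻¹' Set.Icc c₁ c₂ :=
  rfl

theorem interior_strip {v : Pt} (hv : v ≠ 0) (c₁ c₂ : ℝ) :
    interior (strip v c₁ c₂) = innerSL ℝ v ⁻¹' Set.Ioo c₁ c₂ := by
  rw [strip_eq_preimage, ← ((innerSL ℝ v).isOpenMap_of_ne_zero ?_)
    |>.preimage_interior_eq_interior_preimage (innerSL ℝ v).continuous, interior_Icc]
  rwa [← norm_ne_zero_iff, innerSL_apply_norm, norm_ne_zero_iff]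

theorem closure_strip (v : Pt) (c₁ c₂ : ℝ) : closure (strip v c₁ c₂) = strip v c₁ c₂ :=
  (isClosed_Icc.preimage (innerSL ℝ v).continuous).closure_eq

theorem strip_neg (v : Pt) (c₁ c₂ : ℝ) : strip (-v) (-c₂) (-c₁) = strip v c₁ c₂ := by
  ext x
  simp only [strip, Set.mem_ofPred_eq, inner_neg_left, neg_le_neg_iff]
  exact and_comm

theorem errSet_strip (R B : Finset Pt) {v : Pt} (hv : v ≠ 0) (c₁ c₂ : ℝ) :
    errSet R B (strip v c₁ c₂) = projErrors R B (⟪v, ·⟫) c₁ c₂ := by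
  ext x
  simp only [errSet, projErrors, mem_union, mem_filter, interior_strip hv, closure_strip]
  exact Iff.rfl

theorem GenPos.exists_inner_ne {P : Finset Pt} (hgen : GenPos P) (hcard : 3 ≤ P.card) {w : Pt}
    (hw : w ≠ 0) (c : ℝ) : ∃ s ∈ P, ⟪w, s⟫ ≠ c := by
  by_contra! h
  obtain ⟨a, ha, b, hb, d, hd, hab, had, hbd⟩ := two_lt_card.1 hcard
  refine hgen.1 a ha b hb d hd hab had hbd (collinear_of_forall_inner_eq finrank_pt hw (c := c) ?_)
  rintro x (rfl | rfl | rfl) <;> apply h <;> assumption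

def IsAnchoredStrip (P : Finset Pt) (v : Pt) (c₁ c₂ : ℝ) : Prop :=
  v ≠ 0 ∧ c₁ ≤ c₂ ∧ (∃ p ∈ P, ∃ q ∈ P, p ≠ q ∧ ⟪v, p⟫ = c₁ ∧ ⟪v, q⟫ = c₁) ∧
    ∃ r ∈ P, ⟪v, r⟫ = c₂

theorem exists_isAnchoredStrip {P : Finset Pt} (hP : 1 < P.card) :
    ∃ v c₁ c₂, IsAnchoredStrip P v c₁ c₂ := by
  obtain ⟨p, hp, q, hq, hpq⟩ := one_lt_card.1 hP
  obtain ⟨w, hw, hpqw⟩ :=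
    exists_ne_zero_inner_eq_zero (by rw [finrank_pt]; exact one_lt_two) (q - p)
  have hwq : ⟪w, q⟫ = ⟪w, p⟫ := by
    rw [← sub_eq_zero, ← inner_sub_right, real_inner_comm]
    exact hpqw
  exact ⟨w, _, _, hw, le_rfl, ⟨p, hp, q, hq, hpq, rfl, hwq⟩, p, hp, rfl⟩

theorem exists_isAnchoredStrip_forall_card_le (R B : Finset Pt) {P : Finset Pt}
    (hP : 1 < P.card) :
    ∃ v c₁ c₂, IsAnchoredStrip P v c₁ c₂ ∧ ∀ u d₁ d₂, IsAnchoredStrip P u d₁ d₂ →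
      (errSet R B (strip v c₁ c₂)).card ≤ (errSet R B (strip u d₁ d₂)).card := by
  let S := {x : Pt × ℝ × ℝ | IsAnchoredStrip P x.1 x.2.1 x.2.2}
  let err := fun x : Pt × ℝ × ℝ => (errSet R B (strip x.1 x.2.1 x.2.2)).card
  obtain ⟨v, c₁, c₂, h⟩ := exists_isAnchoredStrip hP
  have hS : S.Nonempty := ⟨(v, c₁, c₂), h⟩
  exact ⟨_, _, _, Function.argminOn_mem err S hS,
    fun u d₁ d₂ hu => Function.argminOn_le err S (a := (u, d₁, d₂)) hu⟩

theorem isAnchoredStrip_of_inner_eq {P : Finset Pt} {v p r s q : Pt} (hv : v ≠ 0) (hp : p ∈ P)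
    (hr : r ∈ P) (hpr : ⟪v, p⟫ ≤ ⟪v, r⟫) (hs : s ∈ P) (hq : q ∈ ({p, r} : Finset Pt))
    (hsq : s ≠ q) (heq : ⟪v, s⟫ = ⟪v, q⟫) :
    ∃ u d₁ d₂, IsAnchoredStrip P u d₁ d₂ ∧ strip u d₁ d₂ = strip v ⟪v, p⟫ ⟪v, r⟫ := by
  rcases mem_insert.1 hq with rfl | hq
  · exact ⟨v, _, _, ⟨hv, hpr, ⟨q, hp, s, hs, hsq.symm, rfl, heq⟩, r, hr, rfl⟩, rfl⟩
  · rw [mem_singleton.1 hq] at hsq heq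
    refine ⟨-v, _, _, ⟨neg_ne_zero.2 hv, neg_le_neg hpr, ⟨r, hr, s, hs, hsq.symm, ?_, ?_⟩, p, hp,
      ?_⟩, strip_neg v _ _⟩ <;> simp only [inner_neg_left, heq]

theorem exists_isAnchoredStrip_errSet_subset {R B : Finset Pt} (hgen : GenPos (B ∪ R))
    (hcard : 3 ≤ (B ∪ R).card) {v p r : Pt} (hv : v ≠ 0) (hp : p ∈ B ∪ R) (hr : r ∈ B ∪ R)
    (hpr : ⟪v, p⟫ ≤ ⟪v, r⟫) :
    ∃ u d₁ d₂, IsAnchoredStrip (B ∪ R) u d₁ d₂ ∧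
      errSet R B (strip u d₁ d₂) ⊆ errSet R B (strip v ⟪v, p⟫ ⟪v, r⟫) := by
  obtain ⟨w, hw, hvw⟩ := exists_ne_zero_inner_eq_zero (by rw [finrank_pt]; exact one_lt_two) v
  obtain ⟨s₀, hs₀, hs₀p⟩ := hgen.exists_inner_ne hcard hw ⟪w, p⟫
  obtain ⟨t, ⟨s, hs, q, hq, hsq, heq⟩, hord⟩ := exists_first_coincidence (B ∪ R) {p, r}
    (⟪v, ·⟫) (⟪w, ·⟫) ⟨s₀, hs₀, p, mem_insert_self p _, hs₀p⟩
  set v' := v + t • w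
  have hv'x : ∀ x, ⟪v', x⟫ = ⟪v, x⟫ + t * ⟪w, x⟫ := fun x => by
    rw [inner_add_left, real_inner_smul_left]
  have hv' : v' ≠ 0 := fun h => by
    have := hv'x v
    rw [h, inner_zero_left, real_inner_comm v w, hvw, mul_zero, add_zero, eq_comm,
      inner_self_eq_zero] at this
    exact hv this
  simp only [← hv'x] at heq hord
  have hpr' : ⟪v', p⟫ ≤ ⟪v', r⟫ :=
    not_lt.1 fun h => not_lt.2 hpr ((hord r hr p (mem_insert_self p _)).1 h)
  obtain ⟨u, d₁, d₂, hanch, hstrip⟩ := isAnchoredStrip_of_inner_eq hv' hp hr hpr' hs hq hsq heq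
  refine ⟨u, d₁, d₂, hanch, ?_⟩
  rw [hstrip, errSet_strip R B hv', errSet_strip R B hv]
  exact projErrors_subset_of_order R B hord

/-- There is an optimal strip one of whose boundary lines passes through two
points of `B ∪ R` and the other through at least one point of `B ∪ R`. -/
theorem exists_opt_strip_through_points (R B : Finset Pt) (hB : B.Nonempty)
    (hcard : 3 ≤ (B ∪ R).card) (hgen : GenPos (B ∪ R)) :
    ∃ (v : Pt) (c₁ c₂ : ℝ), v ≠ 0 ∧ c₁ ≤ c₂ ∧
      (∃ p ∈ B ∪ R, ∃ q ∈ B ∪ R, p ≠ q ∧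
        (inner ℝ v p : ℝ) = c₁ ∧ (inner ℝ v q : ℝ) = c₁) ∧
      (∃ r ∈ B ∪ R, (inner ℝ v r : ℝ) = c₂) ∧
      ∀ (v' : Pt) (c₁' c₂' : ℝ), v' ≠ 0 → c₁' ≤ c₂' →
        (errSet R B (strip v c₁ c₂)).card ≤ (errSet R B (strip v' c₁' c₂')).card := by
  obtain ⟨v, c₁, c₂, ⟨hv, hc, hline₁, hline₂⟩, hmin⟩ :=
    exists_isAnchoredStrip_forall_card_le R B (P := B ∪ R) (by omega)
  refine ⟨v, c₁, c₂, hv, hc, hline₁, hline₂, fun v' c₁' c₂' hv' _ => ?_⟩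
  obtain ⟨p, hp, r, hr, hpr, hsnap⟩ := exists_projErrors_subset R B hB (⟪v', ·⟫) c₁' c₂'
  obtain ⟨u, d₁, d₂, hanch, hrot⟩ := exists_isAnchoredStrip_errSet_subset hgen hcard hv' hp hr hpr
  refine (hmin u d₁ d₂ hanch).trans (card_le_card (hrot.trans ?_))
  rwa [errSet_strip R B hv', errSet_strip R B hv']
end
end

section
/- Let F be a finite nonempty set of affine functions ℝ → ℝ with upper envelope U and lower envelope L, and let h : ℝ → ℝ be an affine function with h ∉ F. If there exist x₁ ≠ x₂ with h(x₁) = U(x₁) and h(x₂) = U(x₂), then h(x) ≠ L(x) for every x ∈ ℝ. -/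
noncomputable section

/-- `f : ℝ → ℝ` is an affine function (a non-vertical line). -/
def IsAffineFn (f : ℝ → ℝ) : Prop := ∃ a b : ℝ, ∀ x, f x = a * x + b

/-- If an affine function `h ∉ F` agrees with the upper envelope of the finite
family `F` of affine functions at two distinct points, then it never agrees
with the lower envelope. -/
theorem upper_twice_imp_never_lower (F : Finset (ℝ → ℝ)) (hF : F.Nonempty)
    (haff : ∀ f ∈ F, IsAffineFn f) (h : ℝ → ℝ) (hh : IsAffineFn h) (hhF : h ∉ F)
    (x₁ x₂ : ℝ) (hne : x₁ ≠ x₂)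
    (h₁ : h x₁ = F.sup' hF (fun f => f x₁))
    (h₂ : h x₂ = F.sup' hF (fun f => f x₂)) :
    ∀ x : ℝ, h x ≠ F.inf' hF (fun f => f x) := by
  intro x hx
  obtain ⟨a, b, hab⟩ := hh
  obtain ⟨f₁, hf₁F, hf₁⟩ := Finset.exists_mem_eq_sup' hF (fun f => f x₁)
  obtain ⟨f₂, hf₂F, hf₂⟩ := Finset.exists_mem_eq_sup' hF (fun f => f x₂)
  obtain ⟨a₁, b₁, hab₁⟩ := haff f₁ hf₁F
  obtain ⟨a₂, b₂, hab₂⟩ := haff f₂ hf₂F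
  -- equalities at the touching points
  have e1 : a * x₁ + b = a₁ * x₁ + b₁ := by
    have := h₁.trans hf₁; rw [hab, hab₁] at this; exact this
  have e2 : a * x₂ + b = a₂ * x₂ + b₂ := by
    have := h₂.trans hf₂; rw [hab, hab₂] at this; exact this
  -- h dominates each f at x₁ and x₂
  have u1 : a₂ * x₁ + b₂ ≤ a * x₁ + b := by
    have := Finset.le_sup' (fun f => f x₁) hf₂F
    rw [← h₁, hab, hab₂] at this; exact this
  have u2 : a₁ * x₂ + b₁ ≤ a * x₂ + b := by
    have := Finset.le_sup' (fun f => f x₂) hf₁F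
    rw [← h₂, hab, hab₁] at this; exact this
  -- h is below each f at x
  have l1 : a * x + b ≤ a₁ * x + b₁ := by
    have := Finset.inf'_le (fun f => f x) hf₁F
    rw [← hx, hab, hab₁] at this; exact this
  have l2 : a * x + b ≤ a₂ * x + b₂ := by
    have := Finset.inf'_le (fun f => f x) hf₂F
    rw [← hx, hab, hab₂] at this; exact this
  -- slopes differ, otherwise h ∈ F
  have ha1 : a ≠ a₁ := by
    intro hEq
    apply hhF
    have hb : b = b₁ := by
      have : a * x₁ = a₁ * x₁ := by rw [hEq]
      linarith
    have : h = f₁ := by funext y; rw [hab, hab₁, hEq, hb]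
    rwa [this]
  have ha2 : a ≠ a₂ := by
    intro hEq
    apply hhF
    have hb : b = b₂ := by
      have : a * x₂ = a₂ * x₂ := by rw [hEq]
      linarith
    have : h = f₂ := by funext y; rw [hab, hab₂, hEq, hb]
    rwa [this]
  -- derive the contradiction
  have d1 : (a - a₁) * (x₂ - x₁) ≥ 0 := by nlinarith
  have d2 : (a - a₂) * (x₂ - x₁) ≤ 0 := by nlinarith
  have d3 : (a - a₁) * (x - x₁) ≤ 0 := by nlinarith
  have d4 : (a - a₂) * (x - x₂) ≤ 0 := by nlinarith
  have h1' : (a - a₁) ≠ 0 := sub_ne_zero.mpr ha1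
  have h2' : (a - a₂) ≠ 0 := sub_ne_zero.mpr ha2
  have p1 : (x₂ - x₁) * (x - x₁) ≤ 0 := by
    have := mul_nonpos_of_nonneg_of_nonpos d1 d3
    nlinarith [sq_nonneg (a - a₁), (mul_self_pos).mpr h1']
  have p2 : (x₂ - x₁) * (x - x₂) ≥ 0 := by
    have := mul_nonneg (neg_nonneg.mpr d2) (neg_nonneg.mpr d4)
    nlinarith [(mul_self_pos).mpr h2']
  have : (x₂ - x₁) ^ 2 ≤ 0 := by nlinarith
  have := sub_ne_zero.mpr hne.symm
  nlinarith [(mul_self_pos).mpr this]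
end
end

section
/- Let F be a finite nonempty set of affine functions ℝ → ℝ with upper envelope U and lower envelope L, and let h : ℝ → ℝ be an affine function such that the slopes of the members of F ∪ {h} are pairwise distinct and there is no x ∈ ℝ at which h and two distinct members of F all take the same value. If there is exactly one x ∈ ℝ with h(x) = U(x), then there is exactly one x ∈ ℝ with h(x) = L(x). -/
noncomputable section

/-- The slope of an affine function. -/
def slopeOf (f : ℝ → ℝ) : ℝ := f 1 - f 0

lemma IsAffineFn.eval {f : ℝ → ℝ} (hf : IsAffineFn f) (x : ℝ) :
    f x = slopeOf f * x + f 0 := by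
  obtain ⟨a, b, hab⟩ := hf
  simp only [slopeOf, hab]
  ring

/-- The intersection point of `h` and `f`. -/
def Xpt (h f : ℝ → ℝ) : ℝ := (f 0 - h 0) / (slopeOf h - slopeOf f)

lemma key_id {h f : ℝ → ℝ} (hh : IsAffineFn h) (hf : IsAffineFn f)
    (hs : slopeOf f ≠ slopeOf h) (x : ℝ) :
    h x - f x = (slopeOf h - slopeOf f) * (x - Xpt h f) := by
  have hne : slopeOf h - slopeOf f ≠ 0 := sub_ne_zero.2 (Ne.symm hs)
  rw [hh.eval x, hf.eval x, Xpt]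
  field_simp
  ring

/-- Suppose the slopes of the members of `F ∪ {h}` are pairwise distinct and at
no point do `h` and two distinct members of `F` all take the same value.  If `h`
agrees with the upper envelope of `F` at exactly one point, then `h` agrees with
the lower envelope of `F` at exactly one point. -/
theorem upper_once_imp_lower_once (F : Finset (ℝ → ℝ)) (hF : F.Nonempty)
    (haff : ∀ f ∈ F, IsAffineFn f) (h : ℝ → ℝ) (hh : IsAffineFn h)
    (hslopesF : ∀ f ∈ F, ∀ g ∈ F, f ≠ g → slopeOf f ≠ slopeOf g)
    (hslopesh : ∀ f ∈ F, slopeOf f ≠ slopeOf h)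
    (hnotriple : ¬ ∃ x : ℝ, ∃ f ∈ F, ∃ g ∈ F, f ≠ g ∧ h x = f x ∧ h x = g x)
    (hU : ∃! x : ℝ, h x = F.sup' hF (fun f => f x)) :
    ∃! x : ℝ, h x = F.inf' hF (fun f => f x) := by
  set a := slopeOf h with ha
  have key : ∀ f ∈ F, ∀ x : ℝ, h x - f x = (a - slopeOf f) * (x - Xpt h f) :=
    fun f hf x => key_id hh (haff f hf) (hslopesh f hf) x
  by_cases hpos : ∀ f ∈ F, a < slopeOf f
  · -- all slopes of F are bigger than a; unique point is sup of Xpt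
    set m := F.sup' hF (Xpt h) with hm
    refine ⟨m, ?_, ?_⟩
    · obtain ⟨f₀, hf₀, hXf₀⟩ := Finset.exists_mem_eq_sup' hF (Xpt h)
      have h1 : h m ≤ F.inf' hF (fun f => f m) := by
        apply Finset.le_inf'
        intro f hf
        have hk := key f hf m
        have hXle : Xpt h f ≤ m := Finset.le_sup' (Xpt h) hf
        nlinarith [hpos f hf]
      have h2 : F.inf' hF (fun f => f m) ≤ h m := by
        have hk := key f₀ hf₀ m
        have : f₀ m = h m := by rw [hm, hXf₀] at hk ⊢; nlinarith
        calc F.inf' hF (fun f => f m) ≤ f₀ m := Finset.inf'_le _ hf₀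
          _ = h m := this
      linarith
    · intro y hy
      have hylem : ∀ f ∈ F, Xpt h f ≤ y := by
        intro f hf
        have hk := key f hf y
        have : h y ≤ f y := hy.le.trans (Finset.inf'_le _ hf)
        nlinarith [hpos f hf]
      have hym : m ≤ y := Finset.sup'_le hF _ hylem
      obtain ⟨f₁, hf₁, hXf₁⟩ := Finset.exists_mem_eq_inf' hF (fun f => f y)
      have h1 : h y = f₁ y := by rw [hy, hXf₁]
      have hk := key f₁ hf₁ y
      have hne : a - slopeOf f₁ ≠ 0 := sub_ne_zero.2 (Ne.symm (hslopesh f₁ hf₁))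
      have : y = Xpt h f₁ := by
        have := hk
        rw [h1] at this
        have h2 : (a - slopeOf f₁) * (y - Xpt h f₁) = 0 := by linarith
        rcases mul_eq_zero.1 h2 with h3 | h3
        · exact absurd h3 hne
        · linarith
      have : y ≤ m := this ▸ Finset.le_sup' (Xpt h) hf₁
      linarith
  · by_cases hneg : ∀ f ∈ F, slopeOf f < a
    · -- all slopes smaller; unique point is inf of Xpt
      set m := F.inf' hF (Xpt h) with hm
      refine ⟨m, ?_, ?_⟩
      · obtain ⟨f₀, hf₀, hXf₀⟩ := Finset.exists_mem_eq_inf' hF (Xpt h)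
        have h1 : h m ≤ F.inf' hF (fun f => f m) := by
          apply Finset.le_inf'
          intro f hf
          have hk := key f hf m
          have hXle : m ≤ Xpt h f := Finset.inf'_le (Xpt h) hf
          nlinarith [hneg f hf]
        have h2 : F.inf' hF (fun f => f m) ≤ h m := by
          have hk := key f₀ hf₀ m
          have : f₀ m = h m := by rw [hm, hXf₀] at hk ⊢; nlinarith
          calc F.inf' hF (fun f => f m) ≤ f₀ m := Finset.inf'_le _ hf₀
            _ = h m := this
        linarith
      · intro y hy
        have hylem : ∀ f ∈ F, y ≤ Xpt h f := by
          intro f hf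
          have hk := key f hf y
          have : h y ≤ f y := hy.le.trans (Finset.inf'_le _ hf)
          nlinarith [hneg f hf]
        have hym : y ≤ m := Finset.le_inf' hF _ hylem
        obtain ⟨f₁, hf₁, hXf₁⟩ := Finset.exists_mem_eq_inf' hF (fun f => f y)
        have h1 : h y = f₁ y := by rw [hy, hXf₁]
        have hk := key f₁ hf₁ y
        have hne : a - slopeOf f₁ ≠ 0 := sub_ne_zero.2 (Ne.symm (hslopesh f₁ hf₁))
        have : y = Xpt h f₁ := by
          rw [h1] at hk
          have h2 : (a - slopeOf f₁) * (y - Xpt h f₁) = 0 := by linarith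
          rcases mul_eq_zero.1 h2 with h3 | h3
          · exact absurd h3 hne
          · linarith
        have : m ≤ y := this ▸ Finset.inf'_le (Xpt h) hf₁
        linarith
    · -- mixed case: contradiction with hU and hnotriple
      exfalso
      push_neg at hpos hneg
      obtain ⟨g, hgF, hg'⟩ := hpos
      obtain ⟨f, hfF, hf'⟩ := hneg
      have hg : slopeOf g < a := lt_of_le_of_ne hg' (hslopesh g hgF)
      have hf : a < slopeOf f := lt_of_le_of_ne hf' (fun e => hslopesh f hfF e.symm)
      obtain ⟨x₀, hx₀, huni⟩ := hU
      set Fp := F.filter (fun f => a < slopeOf f) with hFp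
      set Fm := F.filter (fun f => slopeOf f < a) with hFm
      have hFpne : Fp.Nonempty := ⟨f, Finset.mem_filter.2 ⟨hfF, hf⟩⟩
      have hFmne : Fm.Nonempty := ⟨g, Finset.mem_filter.2 ⟨hgF, hg⟩⟩
      set q := Fp.inf' hFpne (Xpt h) with hq
      set p := Fm.sup' hFmne (Xpt h) with hp
      have hfx₀ : ∀ f' ∈ F, f' x₀ ≤ h x₀ := by
        intro f' hf'
        rw [hx₀]
        exact Finset.le_sup' (fun f => f x₀) hf'
      have hx₀q : x₀ ≤ q := by
        apply Finset.le_inf'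
        intro f' hf'
        obtain ⟨hf'F, hf's⟩ := Finset.mem_filter.1 hf'
        have hk := key f' hf'F x₀
        have := hfx₀ f' hf'F
        nlinarith
      have hpx₀ : p ≤ x₀ := by
        apply Finset.sup'_le
        intro f' hf'
        obtain ⟨hf'F, hf's⟩ := Finset.mem_filter.1 hf'
        have hk := key f' hf'F x₀
        have := hfx₀ f' hf'F
        nlinarith
      -- h equals U at q
      have hUq : ∀ z : ℝ, p ≤ z → z ≤ q → ∀ f' ∈ F, f' z ≤ h z := by
        intro z hpz hzq f' hf'F
        have hk := key f' hf'F z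
        rcases lt_or_gt_of_ne (fun e => hslopesh f' hf'F e : slopeOf f' ≠ a) with hs | hs
        · -- slope f' < a, so Xpt ≤ p ≤ z
          have hXp : Xpt h f' ≤ p := Finset.le_sup' (Xpt h) (Finset.mem_filter.2 ⟨hf'F, hs⟩)
          nlinarith
        · -- a < slope f', so z ≤ q ≤ Xpt
          have hXq : q ≤ Xpt h f' := Finset.inf'_le (Xpt h) (Finset.mem_filter.2 ⟨hf'F, hs⟩)
          nlinarith
      obtain ⟨fs, hfs, hXfs⟩ := Finset.exists_mem_eq_inf' hFpne (Xpt h)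
      obtain ⟨gs, hgs, hXgs⟩ := Finset.exists_mem_eq_sup' hFmne (Xpt h)
      obtain ⟨hfsF, hfss⟩ := Finset.mem_filter.1 hfs
      obtain ⟨hgsF, hgss⟩ := Finset.mem_filter.1 hgs
      have hfsq : fs q = h q := by
        have hk := key fs hfsF q
        rw [hq, hXfs] at hk ⊢
        nlinarith
      have hgsp : gs p = h p := by
        have hk := key gs hgsF p
        rw [hp, hXgs] at hk ⊢
        nlinarith
      have hqx₀ : q = x₀ := by
        apply huni
        apply le_antisymm
        · rw [← hfsq]
          exact Finset.le_sup' (fun f => f q) hfsF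
        · exact Finset.sup'_le _ _ (hUq q (hpx₀.trans hx₀q) le_rfl)
      have hpx₀' : p = x₀ := by
        apply huni
        apply le_antisymm
        · rw [← hgsp]
          exact Finset.le_sup' (fun f => f p) hgsF
        · exact Finset.sup'_le _ _ (hUq p le_rfl (hpx₀.trans hx₀q))
      have hne : fs ≠ gs := by
        intro e
        rw [e] at hfss
        exact absurd hfss (asymm hgss)
      exact hnotriple ⟨x₀, fs, hfsF, gs, hgsF, hne,
        by rw [← hqx₀, hfsq], by rw [← hpx₀', hgsp]⟩
end
end

section
/- Let F be a finite nonempty set of affine functions ℝ → ℝ with upper envelope U and lower envelope L, and let h : ℝ → ℝ be an affine function such that the slopes of the members of F ∪ {h} are pairwise distinct and there is no x ∈ ℝ at which h and two distinct members of F all take the same value. Let n_U be the number of x ∈ ℝ with h(x) = U(x) and n_L the number of x ∈ ℝ with h(x) = L(x). Then the pair (n_U, n_L) is one of (2,0), (0,2), (1,1), (0,0). -/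
noncomputable section

open Classical in
/-- Auxiliary: the set of `f ∈ F` whose crossing point with `h` is a "winning"
point, determined by a sign predicate `ε`. -/
def UGset (F : Finset (ℝ → ℝ)) (x : (ℝ → ℝ) → ℝ) (ε : (ℝ → ℝ) → Prop) : Finset (ℝ → ℝ) :=
  F.filter (fun f => ∀ g ∈ F, g ≠ f → ((ε g ∧ x g < x f) ∨ (¬ ε g ∧ x f < x g)))

lemma mem_UGset {F : Finset (ℝ → ℝ)} {x : (ℝ → ℝ) → ℝ} {ε : (ℝ → ℝ) → Prop}
    {f : ℝ → ℝ} :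
    f ∈ UGset F x ε ↔ f ∈ F ∧
      ∀ g ∈ F, g ≠ f → ((ε g ∧ x g < x f) ∨ (¬ ε g ∧ x f < x g)) := by
  classical
  simp [UGset]

lemma UGset_eq_singleton_max {F : Finset (ℝ → ℝ)} {x : (ℝ → ℝ) → ℝ} {ε : (ℝ → ℝ) → Prop}
    (hinj : ∀ f ∈ F, ∀ g ∈ F, x f = x g → f = g)
    (hall : ∀ g ∈ F, ε g) {p : ℝ → ℝ} (hp : p ∈ F) (hpmax : ∀ g ∈ F, x g ≤ x p) :
    UGset F x ε = {p} := by
  ext f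
  simp only [Finset.mem_singleton, mem_UGset]
  constructor
  · rintro ⟨hf, hc⟩
    by_contra hfp
    rcases hc p hp (fun e => hfp e.symm) with ⟨_, hlt⟩ | ⟨hne, _⟩
    · exact absurd (hpmax f hf) (not_le.mpr hlt)
    · exact hne (hall p hp)
  · rintro rfl
    refine ⟨hp, fun g hg hgf => Or.inl ⟨hall g hg, ?_⟩⟩
    exact lt_of_le_of_ne (hpmax g hg) (fun e => hgf (hinj g hg f hp e))

lemma UGset_eq_singleton_min {F : Finset (ℝ → ℝ)} {x : (ℝ → ℝ) → ℝ} {ε : (ℝ → ℝ) → Prop}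
    (hinj : ∀ f ∈ F, ∀ g ∈ F, x f = x g → f = g)
    (hall : ∀ g ∈ F, ¬ ε g) {p : ℝ → ℝ} (hp : p ∈ F) (hpmin : ∀ g ∈ F, x p ≤ x g) :
    UGset F x ε = {p} := by
  ext f
  simp only [Finset.mem_singleton, mem_UGset]
  constructor
  · rintro ⟨hf, hc⟩
    by_contra hfp
    rcases hc p hp (fun e => hfp e.symm) with ⟨hne, _⟩ | ⟨_, hlt⟩
    · exact hall p hp hne
    · exact absurd (hpmin f hf) (not_le.mpr hlt)
  · rintro rfl
    refine ⟨hp, fun g hg hgf => Or.inr ⟨hall g hg, ?_⟩⟩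
    exact lt_of_le_of_ne (hpmin g hg) (fun e => hgf (hinj f hp g hg e).symm)

open Classical in
lemma UGset_eq_pair {F : Finset (ℝ → ℝ)} {x : (ℝ → ℝ) → ℝ} {ε : (ℝ → ℝ) → Prop}
    (hinj : ∀ f ∈ F, ∀ g ∈ F, x f = x g → f = g)
    {p n : ℝ → ℝ} (hp : p ∈ F) (hεp : ε p) (hpmax : ∀ g ∈ F, ε g → x g ≤ x p)
    (hn : n ∈ F) (hεn : ¬ ε n) (hnmin : ∀ g ∈ F, ¬ ε g → x n ≤ x g)
    (hlt : x p < x n) :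
    UGset F x ε = {p, n} := by
  ext f
  simp only [Finset.mem_insert, Finset.mem_singleton, mem_UGset]
  constructor
  · rintro ⟨hf, hc⟩
    by_cases hεf : ε f
    · left
      by_contra hfp
      rcases hc p hp (fun e => hfp e.symm) with ⟨_, hlt'⟩ | ⟨hne, _⟩
      · exact absurd (hpmax f hf hεf) (not_le.mpr hlt')
      · exact hne hεp
    · right
      by_contra hfn
      rcases hc n hn (fun e => hfn e.symm) with ⟨hne, _⟩ | ⟨_, hlt'⟩
      · exact hεn hne
      · exact absurd (hnmin f hf hεf) (not_le.mpr hlt')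
  · rintro (rfl | rfl)
    · refine ⟨hp, fun g hg hgf => ?_⟩
      by_cases hεg : ε g
      · exact Or.inl ⟨hεg, lt_of_le_of_ne (hpmax g hg hεg)
          (fun e => hgf (hinj g hg f hp e))⟩
      · exact Or.inr ⟨hεg, lt_of_lt_of_le hlt (hnmin g hg hεg)⟩
    · refine ⟨hn, fun g hg hgf => ?_⟩
      by_cases hεg : ε g
      · exact Or.inl ⟨hεg, lt_of_le_of_lt (hpmax g hg hεg) hlt⟩
      · exact Or.inr ⟨hεg, lt_of_le_of_ne (hnmin g hg hεg)
          (fun e => hgf (hinj f hn g hg e).symm)⟩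

lemma UGset_eq_empty {F : Finset (ℝ → ℝ)} {x : (ℝ → ℝ) → ℝ} {ε : (ℝ → ℝ) → Prop}
    {p n : ℝ → ℝ} (hp : p ∈ F) (hεp : ε p) (hpmax : ∀ g ∈ F, ε g → x g ≤ x p)
    (hn : n ∈ F) (hεn : ¬ ε n) (hnmin : ∀ g ∈ F, ¬ ε g → x n ≤ x g)
    (hle : x n ≤ x p) :
    UGset F x ε = ∅ := by
  ext f
  simp only [Finset.notMem_empty, iff_false, mem_UGset, not_and]
  intro hf hc
  by_cases hεf : ε f
  · have hfn : n ≠ f := fun e => hεn (e ▸ hεf)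
    have h1 : x f < x n := by
      rcases hc n hn hfn with ⟨hne, _⟩ | ⟨_, hlt'⟩
      · exact absurd hne hεn
      · exact hlt'
    have h2 : x f ≤ x p := hpmax f hf hεf
    by_cases hfp : p = f
    · exact absurd (hfp ▸ (h1.trans_le hle)) (lt_irrefl _)
    · rcases hc p hp hfp with ⟨_, hlt'⟩ | ⟨hne, _⟩
      · exact absurd (hlt'.trans (h1.trans_le hle)) (lt_irrefl _)
      · exact hne hεp
  · have hfp : p ≠ f := fun e => hεf (e ▸ hεp)
    have h1 : x p < x f := by
      rcases hc p hp hfp with ⟨_, hlt'⟩ | ⟨hne, _⟩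
      · exact hlt'
      · exact absurd hεp hne
    have h2 : x n ≤ x f := hnmin f hf hεf
    by_cases hfn : n = f
    · exact absurd (hfn ▸ (hle.trans_lt h1)) (lt_irrefl _)
    · rcases hc n hn hfn with ⟨hne, _⟩ | ⟨_, hlt'⟩
      · exact absurd hne hεn
      · exact absurd ((hle.trans_lt h1).trans hlt') (lt_irrefl _)

lemma UG_counts (F : Finset (ℝ → ℝ)) (hF : F.Nonempty) (x : (ℝ → ℝ) → ℝ)
    (hinj : ∀ f ∈ F, ∀ g ∈ F, x f = x g → f = g) (ε : (ℝ → ℝ) → Prop) :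
    ((UGset F x ε).card = 2 ∧ (UGset F x (fun g => ¬ ε g)).card = 0) ∨
    ((UGset F x ε).card = 0 ∧ (UGset F x (fun g => ¬ ε g)).card = 2) ∨
    ((UGset F x ε).card = 1 ∧ (UGset F x (fun g => ¬ ε g)).card = 1) ∨
    ((UGset F x ε).card = 0 ∧ (UGset F x (fun g => ¬ ε g)).card = 0) := by
  classical
  by_cases hAll : ∀ g ∈ F, ε g
  · -- all positive: one max for U, one min for L
    obtain ⟨p, hp, hpmax⟩ := F.exists_max_image x hF
    obtain ⟨q, hq, hqmin⟩ := F.exists_min_image x hF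
    refine Or.inr (Or.inr (Or.inl ⟨?_, ?_⟩))
    · rw [UGset_eq_singleton_max hinj hAll hp hpmax, Finset.card_singleton]
    · rw [UGset_eq_singleton_min hinj (fun g hg => not_not.mpr (hAll g hg)) hq hqmin,
        Finset.card_singleton]
  · by_cases hNone : ∀ g ∈ F, ¬ ε g
    · obtain ⟨p, hp, hpmax⟩ := F.exists_max_image x hF
      obtain ⟨q, hq, hqmin⟩ := F.exists_min_image x hF
      refine Or.inr (Or.inr (Or.inl ⟨?_, ?_⟩))
      · rw [UGset_eq_singleton_min hinj hNone hq hqmin, Finset.card_singleton]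
      · rw [UGset_eq_singleton_max hinj hNone hp hpmax, Finset.card_singleton]
    · -- mixed case
      push_neg at hAll hNone
      obtain ⟨n0, hn0, hεn0⟩ := hAll
      obtain ⟨p0, hp0, hεp0⟩ := hNone
      set P : Finset (ℝ → ℝ) := F.filter ε with hP
      set N : Finset (ℝ → ℝ) := F.filter (fun g => ¬ ε g) with hN
      have hPne : P.Nonempty := ⟨p0, Finset.mem_filter.mpr ⟨hp0, hεp0⟩⟩
      have hNne : N.Nonempty := ⟨n0, Finset.mem_filter.mpr ⟨hn0, hεn0⟩⟩
      obtain ⟨p, hpP, hpmax⟩ := P.exists_max_image x hPne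
      obtain ⟨p', hp'P, hp'min⟩ := P.exists_min_image x hPne
      obtain ⟨n, hnN, hnmin⟩ := N.exists_min_image x hNne
      obtain ⟨n', hn'N, hn'max⟩ := N.exists_max_image x hNne
      obtain ⟨hpF, hεp⟩ := Finset.mem_filter.mp hpP
      obtain ⟨hp'F, hεp'⟩ := Finset.mem_filter.mp hp'P
      obtain ⟨hnF, hεn⟩ := Finset.mem_filter.mp hnN
      obtain ⟨hn'F, hεn'⟩ := Finset.mem_filter.mp hn'N
      have hpmax' : ∀ g ∈ F, ε g → x g ≤ x p := fun g hg hεg =>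
        hpmax g (Finset.mem_filter.mpr ⟨hg, hεg⟩)
      have hp'min' : ∀ g ∈ F, ε g → x p' ≤ x g := fun g hg hεg =>
        hp'min g (Finset.mem_filter.mpr ⟨hg, hεg⟩)
      have hnmin' : ∀ g ∈ F, ¬ ε g → x n ≤ x g := fun g hg hεg =>
        hnmin g (Finset.mem_filter.mpr ⟨hg, hεg⟩)
      have hn'max' : ∀ g ∈ F, ¬ ε g → x g ≤ x n' := fun g hg hεg =>
        hn'max g (Finset.mem_filter.mpr ⟨hg, hεg⟩)
      have hpn : p ≠ n := fun e => hεn (e ▸ hεp)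
      have hp'n' : n' ≠ p' := fun e => hεn' (e ▸ hεp')
      by_cases hc1 : x p < x n
      · refine Or.inl ⟨?_, ?_⟩
        · rw [UGset_eq_pair hinj hpF hεp hpmax' hnF hεn hnmin' hc1]
          rw [Finset.card_insert_of_notMem (by simpa using hpn), Finset.card_singleton]
        · rw [UGset_eq_empty (ε := fun g => ¬ ε g) hn'F hεn'
            (fun g hg hεg => hn'max' g hg hεg)
            hp'F (not_not.mpr hεp') (fun g hg hεg => hp'min' g hg (not_not.mp hεg))
            ((hp'min' p hpF hεp).trans (hc1.le.trans (hnmin' n' hn'F hεn')))]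
          exact Finset.card_empty
      · by_cases hc2 : x n' < x p'
        · refine Or.inr (Or.inl ⟨?_, ?_⟩)
          · rw [UGset_eq_empty hpF hεp hpmax' hnF hεn hnmin' (not_lt.mp hc1)]
            exact Finset.card_empty
          · rw [UGset_eq_pair (ε := fun g => ¬ ε g) hinj hn'F hεn'
              (fun g hg hεg => hn'max' g hg hεg)
              hp'F (not_not.mpr hεp') (fun g hg hεg => hp'min' g hg (not_not.mp hεg)) hc2]
            rw [Finset.card_insert_of_notMem (by simpa using hp'n'), Finset.card_singleton]
        · refine Or.inr (Or.inr (Or.inr ⟨?_, ?_⟩))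
          · rw [UGset_eq_empty hpF hεp hpmax' hnF hεn hnmin' (not_lt.mp hc1)]
            exact Finset.card_empty
          · rw [UGset_eq_empty (ε := fun g => ¬ ε g) hn'F hεn'
              (fun g hg hεg => hn'max' g hg hεg)
              hp'F (not_not.mpr hεp') (fun g hg hεg => hp'min' g hg (not_not.mp hεg))
              (not_lt.mp hc2)]
            exact Finset.card_empty

/-- Suppose the slopes of the members of `F ∪ {h}` are pairwise distinct and at
no point do `h` and two distinct members of `F` all take the same value.  If
`n_U` is the number of points where `h` agrees with the upper envelope of `F`
and `n_L` the number of points where `h` agrees with the lower envelope, then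
`(n_U, n_L)` is one of `(2,0)`, `(0,2)`, `(1,1)`, `(0,0)`. -/
theorem envelope_agreement_counts (F : Finset (ℝ → ℝ)) (hF : F.Nonempty)
    (haff : ∀ f ∈ F, IsAffineFn f) (h : ℝ → ℝ) (hh : IsAffineFn h)
    (hslopesF : ∀ f ∈ F, ∀ g ∈ F, f ≠ g → slopeOf f ≠ slopeOf g)
    (hslopesh : ∀ f ∈ F, slopeOf f ≠ slopeOf h)
    (hnotriple : ¬ ∃ x : ℝ, ∃ f ∈ F, ∃ g ∈ F, f ≠ g ∧ h x = f x ∧ h x = g x)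
    (nU nL : ℕ)
    (hnU : nU = {x : ℝ | h x = F.sup' hF (fun f => f x)}.ncard)
    (hnL : nL = {x : ℝ | h x = F.inf' hF (fun f => f x)}.ncard) :
    (nU = 2 ∧ nL = 0) ∨ (nU = 0 ∧ nL = 2) ∨ (nU = 1 ∧ nL = 1) ∨ (nU = 0 ∧ nL = 0) := by
  classical
  have haffeq : ∀ f : ℝ → ℝ, IsAffineFn f → ∀ y, f y = slopeOf f * y + f 0 := by
    rintro f ⟨a, b, hab⟩ y
    have h1 : slopeOf f = a := by simp [slopeOf, hab]
    have h0 : f 0 = b := by simp [hab]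
    rw [hab y, h1, h0]
  set xc : (ℝ → ℝ) → ℝ := fun f => (f 0 - h 0) / (slopeOf h - slopeOf f) with hxc
  have hdiff : ∀ f ∈ F, ∀ y, h y - f y = (slopeOf h - slopeOf f) * (y - xc f) := by
    intro f hf y
    have hne : slopeOf h - slopeOf f ≠ 0 := sub_ne_zero.mpr (Ne.symm (hslopesh f hf))
    rw [haffeq f (haff f hf) y, haffeq h hh y]
    simp only [hxc]
    field_simp
    ring
  have heq_iff : ∀ f ∈ F, ∀ y, (h y = f y ↔ y = xc f) := by
    intro f hf y
    have hne : slopeOf h - slopeOf f ≠ 0 := sub_ne_zero.mpr (Ne.symm (hslopesh f hf))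
    constructor
    · intro he
      have : (slopeOf h - slopeOf f) * (y - xc f) = 0 := by rw [← hdiff f hf y]; linarith
      rcases mul_eq_zero.mp this with h' | h'
      · exact absurd h' hne
      · linarith [sub_eq_zero.mp h']
    · intro he
      have := hdiff f hf y
      rw [he] at this ⊢
      rw [sub_self, mul_zero] at this
      linarith
  have ε : (ℝ → ℝ) → Prop := fun f => slopeOf f < slopeOf h
  have hgt_iff : ∀ g ∈ F, ∀ y, (g y < h y ↔
      ((slopeOf g < slopeOf h ∧ xc g < y) ∨ (¬ slopeOf g < slopeOf h ∧ y < xc g))) := by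
    intro g hg y
    have hne : slopeOf g ≠ slopeOf h := hslopesh g hg
    have hd := hdiff g hg y
    constructor
    · intro hlt
      have hpos : 0 < (slopeOf h - slopeOf g) * (y - xc g) := by linarith
      rcases mul_pos_iff.mp hpos with ⟨h1, h2⟩ | ⟨h1, h2⟩
      · exact Or.inl ⟨by linarith, by linarith⟩
      · exact Or.inr ⟨by intro hc; linarith, by linarith⟩
    · rintro (⟨h1, h2⟩ | ⟨h1, h2⟩)
      · nlinarith
      · have h1' : slopeOf h < slopeOf g := lt_of_le_of_ne (not_lt.mp h1) (Ne.symm hne)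
        nlinarith
  have hlt_iff : ∀ g ∈ F, ∀ y, (h y < g y ↔
      ((¬ slopeOf g < slopeOf h ∧ xc g < y) ∨ (¬ ¬ slopeOf g < slopeOf h ∧ y < xc g))) := by
    intro g hg y
    have hne : slopeOf g ≠ slopeOf h := hslopesh g hg
    have hd := hdiff g hg y
    constructor
    · intro hlt
      have hneg : (slopeOf h - slopeOf g) * (y - xc g) < 0 := by linarith
      rcases mul_neg_iff.mp hneg with ⟨h1, h2⟩ | ⟨h1, h2⟩
      · exact Or.inr ⟨not_not.mpr (by linarith), by linarith⟩
      · exact Or.inl ⟨by intro hc; linarith, by linarith⟩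
    · rintro (⟨h1, h2⟩ | ⟨h1, h2⟩)
      · have h1' : slopeOf h < slopeOf g := lt_of_le_of_ne (not_lt.mp h1) (Ne.symm hne)
        nlinarith
      · rw [not_not] at h1
        nlinarith
  have hinj : ∀ f ∈ F, ∀ g ∈ F, xc f = xc g → f = g := by
    intro f hf g hg he
    by_contra hfg
    have h1 : h (xc f) = f (xc f) := (heq_iff f hf (xc f)).mpr rfl
    have h2 : h (xc f) = g (xc f) := by
      rw [he]; exact (heq_iff g hg (xc g)).mpr rfl
    exact hnotriple ⟨xc f, f, hf, g, hg, hfg, h1, h2⟩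
  -- upper envelope set
  have hUset : {x : ℝ | h x = F.sup' hF (fun f => f x)} =
      ↑((UGset F xc (fun f => slopeOf f < slopeOf h)).image xc) := by
    ext y
    simp only [Set.mem_setOf_eq, Finset.coe_image, Set.mem_image, Finset.mem_coe, mem_UGset]
    constructor
    · intro hy
      obtain ⟨f, hf, hfeq⟩ := Finset.exists_mem_eq_sup' hF (fun f => f y)
      have hyf : h y = f y := hy.trans hfeq
      have hy_eq : y = xc f := (heq_iff f hf y).mp hyf
      refine ⟨f, ⟨hf, ?_⟩, hy_eq.symm⟩
      intro g hg hgf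
      have hle : g y ≤ h y := by
        rw [hy]; exact Finset.le_sup' (fun f => f y) hg
      have hne' : h y ≠ g y := fun hcontra =>
        hnotriple ⟨y, f, hf, g, hg, Ne.symm hgf, hyf, hcontra⟩
      have hlt : g y < h y := lt_of_le_of_ne hle (fun e => hne' e.symm)
      rw [← hy_eq]
      exact (hgt_iff g hg y).mp hlt
    · rintro ⟨f, ⟨hf, hfU⟩, rfl⟩
      have hhf : h (xc f) = f (xc f) := (heq_iff f hf (xc f)).mpr rfl
      apply le_antisymm
      · rw [hhf]; exact Finset.le_sup' (fun g => g (xc f)) hf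
      · apply Finset.sup'_le
        intro g hg
        by_cases hgf : g = f
        · rw [hgf]; exact le_of_eq hhf.symm
        · exact le_of_lt ((hgt_iff g hg (xc f)).mpr (hfU g hg hgf))
  have hLset : {x : ℝ | h x = F.inf' hF (fun f => f x)} =
      ↑((UGset F xc (fun f => ¬ slopeOf f < slopeOf h)).image xc) := by
    ext y
    simp only [Set.mem_setOf_eq, Finset.coe_image, Set.mem_image, Finset.mem_coe, mem_UGset]
    constructor
    · intro hy
      obtain ⟨f, hf, hfeq⟩ := Finset.exists_mem_eq_inf' hF (fun f => f y)
      have hyf : h y = f y := hy.trans hfeq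
      have hy_eq : y = xc f := (heq_iff f hf y).mp hyf
      refine ⟨f, ⟨hf, ?_⟩, hy_eq.symm⟩
      intro g hg hgf
      have hle : h y ≤ g y := by
        rw [hy]; exact Finset.inf'_le (fun f => f y) hg
      have hne' : h y ≠ g y := fun hcontra =>
        hnotriple ⟨y, f, hf, g, hg, Ne.symm hgf, hyf, hcontra⟩
      have hlt : h y < g y := lt_of_le_of_ne hle hne'
      rw [← hy_eq]
      exact (hlt_iff g hg y).mp hlt
    · rintro ⟨f, ⟨hf, hfU⟩, rfl⟩
      have hhf : h (xc f) = f (xc f) := (heq_iff f hf (xc f)).mpr rfl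
      apply le_antisymm
      · apply Finset.le_inf'
        intro g hg
        by_cases hgf : g = f
        · rw [hgf]; exact le_of_eq hhf
        · exact le_of_lt ((hlt_iff g hg (xc f)).mpr (hfU g hg hgf))
      · rw [hhf]; exact Finset.inf'_le (fun g => g (xc f)) hf
  have hinjU : Set.InjOn xc ↑(UGset F xc (fun f => slopeOf f < slopeOf h)) := by
    intro a ha b hb he
    exact hinj a (mem_UGset.mp (Finset.mem_coe.mp ha)).1 b (mem_UGset.mp (Finset.mem_coe.mp hb)).1 he
  have hinjL : Set.InjOn xc ↑(UGset F xc (fun f => ¬ slopeOf f < slopeOf h)) := by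
    intro a ha b hb he
    exact hinj a (mem_UGset.mp (Finset.mem_coe.mp ha)).1 b (mem_UGset.mp (Finset.mem_coe.mp hb)).1 he
  have hnU' : nU = (UGset F xc (fun f => slopeOf f < slopeOf h)).card := by
    rw [hnU, hUset, Set.ncard_coe_finset, Finset.card_image_of_injOn hinjU]
  have hnL' : nL = (UGset F xc (fun f => ¬ slopeOf f < slopeOf h)).card := by
    rw [hnL, hLset, Set.ncard_coe_finset, Finset.card_image_of_injOn hinjL]
  rw [hnU', hnL']
  exact UG_counts F hF xc hinj (fun f => slopeOf f < slopeOf h)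
end
end

section
/- Let g : ℝ → ℝ be an affine function, let R' and B' be finite sets of points of ℝ² lying strictly below the graph of g (i.e. y < g(x) for every (x, y) ∈ R' ∪ B'), and fix x_p ∈ ℝ. Then there exists an affine function ℓ* : ℝ → ℝ with ℓ*(x_p) = g(x_p) and slope(ℓ*) < slope(g) such that interior(W(ℓ*)) ∩ R' = ∅, and for every affine function m with m(x_p) = g(x_p), slope(m) < slope(g), and interior(W(m)) ∩ R' = ∅, one has E(ℓ*) ≤ E(m). -/
open Classical

noncomputable section

/-- The number of misclassifications of the wedge `W(m) = {(x,y) : m x ≤ y ≤ g x}`: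
red points of `R'` in the interior `{(x,y) : m x < y < g x}` of the wedge plus blue
points of `B'` outside the wedge. -/
def wedgeErr (g m : ℝ → ℝ) (R' B' : Finset (ℝ × ℝ)) : ℕ :=
  (R'.filter fun q => m q.1 < q.2 ∧ q.2 < g q.1).card +
    (B'.filter fun q => ¬ (m q.1 ≤ q.2 ∧ q.2 ≤ g q.1)).card

/-- Among all lines `m` through the point `p = (x_p, g x_p)` of the line `g`, with
slope less than that of `g`, whose wedge with `g` contains no red point of `R'` in
its interior, there is one minimizing the number of misclassifications. -/
theorem exists_opt_line_through_point (g : ℝ → ℝ) (hg : IsAffineFn g)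
    (R' B' : Finset (ℝ × ℝ)) (hbelow : ∀ q ∈ R' ∪ B', q.2 < g q.1) (xp : ℝ) :
    ∃ l : ℝ → ℝ, IsAffineFn l ∧ l xp = g xp ∧ slopeOf l < slopeOf g ∧
      (∀ q ∈ R', ¬ (l q.1 < q.2 ∧ q.2 < g q.1)) ∧
      ∀ m : ℝ → ℝ, IsAffineFn m → m xp = g xp → slopeOf m < slopeOf g →
        (∀ q ∈ R', ¬ (m q.1 < q.2 ∧ q.2 < g q.1)) →
        wedgeErr g l R' B' ≤ wedgeErr g m R' B' := by
  obtain ⟨ag, bg, hgab⟩ := hg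
  have hgslope : slopeOf g = ag := by simp [slopeOf, hgab]
  set line : ℝ → ℝ → ℝ := fun s x => s * (x - xp) + g xp with hlinedef
  have hlineaff : ∀ s, IsAffineFn (line s) := by
    intro s; exact ⟨s, g xp - s * xp, fun x => by simp [hlinedef]; ring⟩
  have hlinexp : ∀ s, line s xp = g xp := by intro s; simp [hlinedef]
  have hlineslope : ∀ s, slopeOf (line s) = s := by
    intro s; simp [slopeOf, hlinedef]; ring
  -- value of g in terms of differences
  have hgval : ∀ x, g x = ag * (x - xp) + g xp := by
    intro x; rw [hgab, hgab]; ring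
  -- feasibility
  set F : Finset ℝ :=
    insert (ag - 1) ((R'.filter fun q => xp < q.1).image fun q => (q.2 - g xp) / (q.1 - xp))
    with hF
  have hFne : F.Nonempty := ⟨ag - 1, Finset.mem_insert_self _ _⟩
  set s0 := F.max' hFne with hs0
  have hs0lt : s0 < ag := by
    rw [hs0, Finset.max'_lt_iff]
    intro t ht
    rw [hF, Finset.mem_insert] at ht
    rcases ht with h | h
    · rw [h]; linarith
    · obtain ⟨q, hq, rfl⟩ := Finset.mem_image.mp h
      rw [Finset.mem_filter] at hq
      have hb : q.2 < g q.1 := hbelow q (Finset.mem_union_left _ hq.1)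
      rw [hgval q.1] at hb
      have hpos : (0:ℝ) < q.1 - xp := by linarith [hq.2]
      rw [div_lt_iff₀ hpos]
      linarith
  have hs0feas : ∀ q ∈ R', q.2 ≤ line s0 q.1 := by
    intro q hq
    rcases lt_trichotomy q.1 xp with h | h | h
    · have hb : q.2 < g q.1 := hbelow q (Finset.mem_union_left _ hq)
      rw [hgval q.1] at hb
      have hneg : q.1 - xp < 0 := by linarith
      have : s0 * (q.1 - xp) ≥ ag * (q.1 - xp) := by nlinarith
      simp only [hlinedef]; linarith
    · have hb : q.2 < g q.1 := hbelow q (Finset.mem_union_left _ hq)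
      simp only [hlinedef, h]
      rw [h] at hb; linarith
    · have hc : (q.2 - g xp) / (q.1 - xp) ≤ s0 := by
        apply Finset.le_max'
        rw [hF, Finset.mem_insert]
        right
        exact Finset.mem_image.mpr ⟨q, Finset.mem_filter.mpr ⟨hq, h⟩, rfl⟩
      have hpos : (0:ℝ) < q.1 - xp := by linarith
      rw [div_le_iff₀ hpos] at hc
      simp only [hlinedef]; linarith
  -- the set of achievable errors
  set S : Set ℕ := {n | ∃ s, s < ag ∧ (∀ q ∈ R', ¬ (line s q.1 < q.2 ∧ q.2 < g q.1)) ∧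
    wedgeErr g (line s) R' B' = n} with hS
  have hSne : S.Nonempty := by
    refine ⟨wedgeErr g (line s0) R' B', s0, hs0lt, ?_, rfl⟩
    intro q hq hcon
    exact absurd hcon.1 (not_lt.mpr (hs0feas q hq))
  obtain ⟨s1, hs1lt, hs1red, hs1err⟩ := Nat.sInf_mem hSne
  refine ⟨line s1, hlineaff s1, hlinexp s1, by rw [hlineslope, hgslope]; exact hs1lt,
    hs1red, ?_⟩
  intro m hm hmxp hmslope hmred
  obtain ⟨a, b, hmab⟩ := hm
  have hmslopea : slopeOf m = a := by simp [slopeOf, hmab]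
  have hmeq : m = line a := by
    funext x
    have hb : a * xp + b = g xp := by rw [← hmab]; exact hmxp
    rw [hmab]; simp only [hlinedef]; linarith [hb]
  rw [hs1err, hmeq]
  apply Nat.sInf_le
  refine ⟨a, ?_, ?_, rfl⟩
  · rw [← hmslopea, ← hgslope]; exact hmslope
  · rw [← hmeq]; exact hmred
end
end

section
/- Let R₁, B₁, R₂, B₂ be finite subsets of ℝ such that every element of R₁ ∪ B₁ is strictly smaller than every element of R₂ ∪ B₂. For finite sets R', B' ⊆ ℝ define M(R', B') = min over y ∈ ℝ of (|{r ∈ R' : r < y}| + |{b ∈ B' : b > y}|). Then M(R₁ ∪ R₂, B₁ ∪ B₂) = min( M(R₁, B₁) + |B₂| , M(R₂, B₂) + |R₁| ). -/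
open Classical

noncomputable section

/-- The error at threshold `y`: red values strictly below `y` plus blue values
strictly above `y`. -/
def kErr (R B : Finset ℝ) (y : ℝ) : ℕ :=
  (R.filter fun r => r < y).card + (B.filter fun b => y < b).card

/-- The minimum error over all thresholds `y ∈ ℝ`. -/
def minErr (R B : Finset ℝ) : ℕ := sInf (Set.range (kErr R B))

lemma minErr_le (R B : Finset ℝ) (y : ℝ) : minErr R B ≤ kErr R B y :=
  Nat.sInf_le ⟨y, rfl⟩

lemma exists_minErr (R B : Finset ℝ) : ∃ y, kErr R B y = minErr R B := by
  have : minErr R B ∈ Set.range (kErr R B) := Nat.sInf_mem ⟨kErr R B 0, 0, rfl⟩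
  exact this

/-- If every value of `R₁ ∪ B₁` is strictly smaller than every value of
`R₂ ∪ B₂`, then the minimum error of the union decomposes as stated. -/
theorem minErr_union (R₁ B₁ R₂ B₂ : Finset ℝ)
    (hsep : ∀ a ∈ R₁ ∪ B₁, ∀ b ∈ R₂ ∪ B₂, a < b) :
    minErr (R₁ ∪ R₂) (B₁ ∪ B₂) =
      min (minErr R₁ B₁ + B₂.card) (minErr R₂ B₂ + R₁.card) := by
  obtain ⟨s, hs1, hs2⟩ : ∃ s : ℝ, (∀ a ∈ R₁ ∪ B₁, a < s) ∧ (∀ b ∈ R₂ ∪ B₂, s ≤ b) := by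
    by_cases h : (R₂ ∪ B₂).Nonempty
    · exact ⟨(R₂ ∪ B₂).min' h, fun a ha => hsep a ha _ ((R₂ ∪ B₂).min'_mem h),
        fun b hb => Finset.min'_le _ _ hb⟩
    · by_cases h1 : (R₁ ∪ B₁).Nonempty
      · exact ⟨(R₁ ∪ B₁).max' h1 + 1,
          fun a ha => lt_of_le_of_lt (Finset.le_max' _ _ ha) (by linarith),
          fun b hb => absurd ⟨b, hb⟩ h⟩
      · exact ⟨0, fun a ha => absurd ⟨a, ha⟩ h1, fun b hb => absurd ⟨b, hb⟩ h⟩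
  have hRdis : Disjoint R₁ R₂ := by
    rw [Finset.disjoint_left]
    intro a ha1 ha2
    exact absurd (hsep a (Finset.mem_union_left _ ha1) a (Finset.mem_union_left _ ha2))
      (lt_irrefl a)
  have hBdis : Disjoint B₁ B₂ := by
    rw [Finset.disjoint_left]
    intro a ha1 ha2
    exact absurd (hsep a (Finset.mem_union_right _ ha1) a (Finset.mem_union_right _ ha2))
      (lt_irrefl a)
  have hadd : ∀ y, kErr (R₁ ∪ R₂) (B₁ ∪ B₂) y = kErr R₁ B₁ y + kErr R₂ B₂ y := by
    intro y
    unfold kErr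
    rw [Finset.filter_union, Finset.filter_union,
      Finset.card_union_of_disjoint (Finset.disjoint_filter_filter hRdis),
      Finset.card_union_of_disjoint (Finset.disjoint_filter_filter hBdis)]
    ring
  apply le_antisymm
  · refine le_min ?_ ?_
    · obtain ⟨y₁, hy₁⟩ := exists_minErr R₁ B₁
      set y' := min y₁ s with hy'
      have h1 : kErr R₁ B₁ y' ≤ minErr R₁ B₁ := by
        rw [← hy₁]
        unfold kErr
        apply Nat.add_le_add
        · apply Finset.card_le_card
          intro r hr
          rw [Finset.mem_filter] at hr ⊢
          exact ⟨hr.1, lt_of_lt_of_le hr.2 (min_le_left _ _)⟩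
        · apply Finset.card_le_card
          intro b hb
          rw [Finset.mem_filter] at hb ⊢
          refine ⟨hb.1, ?_⟩
          rcases min_cases y₁ s with ⟨he, _⟩ | ⟨he, hlt⟩
          · rw [← he]; exact hb.2
          · exact absurd (lt_trans hb.2 (hs1 b (Finset.mem_union_right _ hb.1)))
              (by rw [hy', he]; exact lt_irrefl s)
      have h2 : R₂.filter (fun r => r < y') = ∅ := by
        apply Finset.filter_eq_empty_iff.mpr
        intro r hr
        have := hs2 r (Finset.mem_union_left _ hr)
        simp only [not_lt]
        exact le_trans (min_le_right _ _) this
      calc minErr (R₁ ∪ R₂) (B₁ ∪ B₂) ≤ kErr (R₁ ∪ R₂) (B₁ ∪ B₂) y' := minErr_le _ _ _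
        _ = kErr R₁ B₁ y' + kErr R₂ B₂ y' := hadd y'
        _ ≤ minErr R₁ B₁ + B₂.card := by
            apply Nat.add_le_add h1
            unfold kErr
            rw [h2]
            simpa using Finset.card_filter_le B₂ _
    · obtain ⟨y₂, hy₂⟩ := exists_minErr R₂ B₂
      set y' := max y₂ s with hy'
      have h1 : kErr R₂ B₂ y' ≤ minErr R₂ B₂ := by
        rw [← hy₂]
        unfold kErr
        apply Nat.add_le_add
        · apply Finset.card_le_card
          intro r hr
          rw [Finset.mem_filter] at hr ⊢
          refine ⟨hr.1, ?_⟩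
          rcases max_cases y₂ s with ⟨he, _⟩ | ⟨he, hlt⟩
          · rw [← he]; exact hr.2
          · exact absurd (lt_of_le_of_lt (hs2 r (Finset.mem_union_left _ hr.1)) hr.2)
              (by rw [hy', he]; exact lt_irrefl s)
        · apply Finset.card_le_card
          intro b hb
          rw [Finset.mem_filter] at hb ⊢
          exact ⟨hb.1, lt_of_le_of_lt (le_max_left _ _) hb.2⟩
      have h2 : B₁.filter (fun b => y' < b) = ∅ := by
        apply Finset.filter_eq_empty_iff.mpr
        intro b hb
        have := hs1 b (Finset.mem_union_right _ hb)
        simp only [not_lt]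
        exact le_trans (le_of_lt this) (le_max_right _ _)
      calc minErr (R₁ ∪ R₂) (B₁ ∪ B₂) ≤ kErr (R₁ ∪ R₂) (B₁ ∪ B₂) y' := minErr_le _ _ _
        _ = kErr R₁ B₁ y' + kErr R₂ B₂ y' := hadd y'
        _ ≤ minErr R₂ B₂ + R₁.card := by
            rw [Nat.add_comm (minErr R₂ B₂)]
            apply Nat.add_le_add _ h1
            unfold kErr
            rw [h2]
            simpa using Finset.card_filter_le R₁ _
  · obtain ⟨y, hy⟩ := exists_minErr (R₁ ∪ R₂) (B₁ ∪ B₂)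
    rw [← hy, hadd y]
    by_cases hb : ∃ b ∈ B₂, b ≤ y
    · obtain ⟨b, hbB, hby⟩ := hb
      refine le_trans (min_le_right _ _) ?_
      have hR1 : (R₁.filter fun r => r < y).card = R₁.card := by
        congr 1
        apply Finset.filter_true_of_mem
        intro r hr
        exact lt_of_lt_of_le (hsep r (Finset.mem_union_left _ hr) b
          (Finset.mem_union_right _ hbB)) hby
      have : R₁.card ≤ kErr R₁ B₁ y := by
        unfold kErr; rw [hR1]; exact Nat.le_add_right _ _
      have h2 := minErr_le R₂ B₂ y
      omega
    · push_neg at hb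
      refine le_trans (min_le_left _ _) ?_
      have hB2 : (B₂.filter fun b' => y < b').card = B₂.card := by
        congr 1
        exact Finset.filter_true_of_mem fun b' hb' => hb b' hb'
      have : B₂.card ≤ kErr R₂ B₂ y := by
        unfold kErr; rw [hB2]; exact Nat.le_add_left _ _
      have h1 := minErr_le R₁ B₁ y
      omega
end
end
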